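/- In the symmetric density decomposition setting, fix ι ∈ {0,1} and let K_ι be a measurable probability kernel from Ω_ῑ to Ω_ι such that K_ι(y, N_ι(y)) = 1 for ν_ῑ^⊥-almost every y ∈ Ω_ῑ. Then the measure on Ω_ι given by A ↦ ∫_{Ω_ῑ} K_ι(y, A) dν_ῑ^⊥(y) is mutually singular with ν_ι. -/

import Mathlib

/- STATEMENT 15: Backward transport preserves singularity
(Lemma `singular_payload_stays_singular_under_backward_kernel`), in the symmetric density
decomposition setting.  "Fix ι ∈ {0,1}" is rendered as the conjunction of the two cases. -/

open MeasureTheory ProbabilityTheory Filter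
open scoped ENNReal NNReal

noncomputable section

variable {Ω0 Ω1 : Type} [MeasurableSpace Ω0] [MeasurableSpace Ω1]

/-- Side-0 refinements: finite plans concentrated on `E` with first marginal `ν0`. -/
def Plans0 (E : Set (Ω0 × Ω1)) (ν0 : Measure Ω0) : Set (Measure (Ω0 × Ω1)) :=
  {π | IsFiniteMeasure π ∧ π Eᶜ = 0 ∧ π.map Prod.fst = ν0}

/-- Side-1 refinements: finite plans concentrated on `E` with second marginal `ν1`. -/
def Plans1 (E : Set (Ω0 × Ω1)) (ν1 : Measure Ω1) : Set (Measure (Ω0 × Ω1)) :=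
  {π | IsFiniteMeasure π ∧ π Eᶜ = 0 ∧ π.map Prod.snd = ν1}

/-- Capped feasible subplans for side-0 refinements (cap on side 1). -/
def Feas0 (E : Set (Ω0 × Ω1)) (ν0 : Measure Ω0) (ν1 : Measure Ω1) (t : ℝ) :
    Set (Measure (Ω0 × Ω1)) :=
  {σ | IsFiniteMeasure σ ∧ σ Eᶜ = 0 ∧ σ.map Prod.fst ≤ ν0 ∧
    σ.map Prod.snd ≤ (ENNReal.ofReal t) • ν1}

def Fit0 (E : Set (Ω0 × Ω1)) (ν0 : Measure Ω0) (ν1 : Measure Ω1) (t : ℝ) : ℝ≥0∞ :=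
  ⨆ σ ∈ Feas0 E ν0 ν1 t, σ Set.univ

/-- Level-optimal maximin from side 0 to side 1. -/
def LevelOpt0 (E : Set (Ω0 × Ω1)) (ν0 : Measure Ω0) (ν1 : Measure Ω1)
    (π : Measure (Ω0 × Ω1)) : Prop :=
  ∀ t : ℝ, 0 < t →
    ∫⁻ y, min ((π.map Prod.snd).rnDeriv ν1 y) (ENNReal.ofReal t) ∂ν1 = Fit0 E ν0 ν1 t

/-- Capped feasible subplans for side-1 refinements (cap on side 0). -/
def Feas1 (E : Set (Ω0 × Ω1)) (ν0 : Measure Ω0) (ν1 : Measure Ω1) (t : ℝ) :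
    Set (Measure (Ω0 × Ω1)) :=
  {σ | IsFiniteMeasure σ ∧ σ Eᶜ = 0 ∧ σ.map Prod.snd ≤ ν1 ∧
    σ.map Prod.fst ≤ (ENNReal.ofReal t) • ν0}

def Fit1 (E : Set (Ω0 × Ω1)) (ν0 : Measure Ω0) (ν1 : Measure Ω1) (t : ℝ) : ℝ≥0∞ :=
  ⨆ σ ∈ Feas1 E ν0 ν1 t, σ Set.univ

/-- Level-optimal maximin from side 1 to side 0. -/
def LevelOpt1 (E : Set (Ω0 × Ω1)) (ν0 : Measure Ω0) (ν1 : Measure Ω1)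
    (π : Measure (Ω0 × Ω1)) : Prop :=
  ∀ t : ℝ, 0 < t →
    ∫⁻ x, min ((π.map Prod.fst).rnDeriv ν0 x) (ENNReal.ofReal t) ∂ν0 = Fit1 E ν0 ν1 t

/-! If the image `μ` of the singular payload `ν⊥` under `K` were not singular to `ν_ι`, it would
have mass `m > 0` on a set `B` where `μ ≤ M • ν_ι`. Coupling `ν⊥` with `K` and restricting to `B`
gives a subplan `τ` whose first marginal is at most `M • ν_ι` and whose second marginal lives
where the density `r` of the opposite marginal vanishes. Thinning `π` to the second marginal
`min r t • ν` gives a feasible plan of mass `Fit(t)`, and adding `t • τ` keeps the second marginal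
below `t • ν` while the first stays below `(1 + t M) • ν_ι`. After rescaling, level-optimality
forces `m ≤ M Fit(t) ≤ M t ν(univ)`, and `t → 0` gives `m = 0`. -/

open Set

section Subcoupling

variable {α β : Type*} [MeasurableSpace α] [MeasurableSpace β]

def IsSubcoupling (E : Set (α × β)) (μ : Measure α) (ν : Measure β) (σ : Measure (α × β)) :
    Prop :=
  IsFiniteMeasure σ ∧ σ Eᶜ = 0 ∧ σ.map Prod.fst ≤ μ ∧ σ.map Prod.snd ≤ ν

namespace IsSubcoupling

variable {E : Set (α × β)} {μ μ' : Measure α} {ν ν' : Measure β} {σ σ' : Measure (α × β)}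

lemma mono (h : IsSubcoupling E μ ν σ) (hμ : μ ≤ μ') (hν : ν ≤ ν') :
    IsSubcoupling E μ' ν' σ :=
  ⟨h.1, h.2.1, h.2.2.1.trans hμ, h.2.2.2.trans hν⟩

lemma add (h : IsSubcoupling E μ ν σ) (h' : IsSubcoupling E μ' ν' σ') :
    IsSubcoupling E (μ + μ') (ν + ν') (σ + σ') := by
  obtain ⟨hfin, hE, hfst, hsnd⟩ := h
  obtain ⟨hfin', hE', hfst', hsnd'⟩ := h'
  refine ⟨inferInstance, by simp [hE, hE'], ?_, ?_⟩
  · rw [Measure.map_add _ _ measurable_fst]; exact add_le_add hfst hfst'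
  · rw [Measure.map_add _ _ measurable_snd]; exact add_le_add hsnd hsnd'

lemma smul (h : IsSubcoupling E μ ν σ) {c : ℝ≥0∞} (hc : c ≠ ∞) :
    IsSubcoupling E (c • μ) (c • ν) (c • σ) := by
  obtain ⟨hfin, hE, hfst, hsnd⟩ := h
  refine ⟨σ.smul_finite hc, by simp [hE], ?_, ?_⟩
  · rw [Measure.map_smul]; gcongr
  · rw [Measure.map_smul]; gcongr

lemma map_swap (h : IsSubcoupling E μ ν σ) :
    IsSubcoupling (Prod.swap ⁻¹' E) ν μ (σ.map Prod.swap) := by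
  obtain ⟨hfin, hE, hfst, hsnd⟩ := h
  refine ⟨inferInstance, ?_, ?_, ?_⟩
  · rw [show (Prod.swap : α × β → β × α) = MeasurableEquiv.prodComm from rfl,
      MeasurableEquiv.map_apply]
    exact hE
  · rwa [← Measure.fst, Measure.fst_map_swap]
  · rwa [← Measure.snd, Measure.snd_map_swap]

end IsSubcoupling

def IsLevelMaximin (E : Set (α × β)) (μ : Measure α) (ν : Measure β) (π : Measure (α × β)) :
    Prop :=
  ∀ t : ℝ, 0 < t → ∀ σ, IsSubcoupling E μ (ENNReal.ofReal t • ν) σ →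
    σ univ ≤ ∫⁻ y, min ((π.map Prod.snd).rnDeriv ν y) (ENNReal.ofReal t) ∂ν

end Subcoupling

variable {E : Set (Ω0 × Ω1)} {ν0 : Measure Ω0} {ν1 : Measure Ω1} {π : Measure (Ω0 × Ω1)} in
lemma LevelOpt0.isLevelMaximin (h : LevelOpt0 E ν0 ν1 π) : IsLevelMaximin E ν0 ν1 π :=
  fun t ht σ hσ ↦ (h t ht).symm ▸ le_iSup₂ (f := fun σ (_ : σ ∈ Feas0 E ν0 ν1 t) ↦ σ univ) σ hσ

variable {E : Set (Ω0 × Ω1)} {ν0 : Measure Ω0} {ν1 : Measure Ω1} {π : Measure (Ω0 × Ω1)} in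
lemma LevelOpt1.isLevelMaximin_map_swap (h : LevelOpt1 E ν0 ν1 π) :
    IsLevelMaximin (Prod.swap ⁻¹' E) ν1 ν0 (π.map Prod.swap) := by
  intro t ht σ hσ
  obtain ⟨hfin, hE, hfst, hsnd⟩ := hσ.map_swap
  have hmem : σ.map Prod.swap ∈ Feas1 E ν0 ν1 t := ⟨hfin, hE, hsnd, hfst⟩
  rw [← Measure.snd, Measure.snd_map_swap, Measure.fst, h t ht]
  calc σ univ = σ.map Prod.swap univ := by
        rw [Measure.map_apply measurable_swap MeasurableSet.univ, preimage_univ]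
    _ ≤ Fit1 E ν0 ν1 t := le_iSup₂ (f := fun σ (_ : σ ∈ Feas1 E ν0 ν1 t) ↦ σ univ) _ hmem

lemma ENNReal.mul_min_one_div_self {r : ℝ≥0∞} (hr : r ≠ ∞) (a : ℝ≥0∞) :
    r * min 1 (a / r) = min r a := by
  rcases eq_or_ne r 0 with rfl | hr0
  · simp
  · rw [mul_min, mul_one, ENNReal.mul_div_cancel hr0 hr]

section Truncation

variable {α β : Type*} [MeasurableSpace α] [MeasurableSpace β]

lemma exists_withDensity_eq_withDensity_min_rnDeriv (P ν : Measure β) [SigmaFinite P]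
    [P.HaveLebesgueDecomposition ν] (a : ℝ≥0∞) :
    ∃ g : β → ℝ≥0∞, Measurable g ∧ g ≤ 1 ∧
      P.withDensity g = ν.withDensity (fun y ↦ min (P.rnDeriv ν y) a) := by
  obtain ⟨T, hT, hPT, hνT⟩ := P.mutuallySingular_singularPart ν
  set r := P.rnDeriv ν
  have hmeas : Measurable fun y ↦ min 1 (a / r y) :=
    measurable_const.min (measurable_const.div (Measure.measurable_rnDeriv P ν))
  refine ⟨T.indicator fun y ↦ min 1 (a / r y), hmeas.indicator hT,
    fun y ↦ indicator_apply_le' (fun _ ↦ min_le_left _ _) (fun _ ↦ zero_le), ?_⟩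
  -- `P.singularPart ν` is null on `T`, so the indicator removes it.
  conv_lhs => rw [P.haveLebesgueDecomposition_add ν]
  rw [withDensity_add_measure, withDensity_indicator hT, Measure.restrict_eq_zero.2 hPT,
    withDensity_zero_left, zero_add, ← withDensity_mul _ (Measure.measurable_rnDeriv P ν)
      (hmeas.indicator hT)]
  refine withDensity_congr_ae ?_
  filter_upwards [measure_eq_zero_iff_ae_notMem.1 hνT, P.rnDeriv_lt_top ν] with y hyT hy
  rw [Pi.mul_apply, indicator_of_mem (not_not.1 hyT), ENNReal.mul_min_one_div_self hy.ne]

lemma map_snd_withDensity_comp_snd (π : Measure (α × β)) {g : β → ℝ≥0∞} (hg : Measurable g) :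
    (π.withDensity (fun p ↦ g p.2)).map Prod.snd = (π.map Prod.snd).withDensity g := by
  ext s hs
  rw [Measure.map_apply measurable_snd hs, withDensity_apply _ (measurable_snd hs),
    withDensity_apply _ hs, setLIntegral_map hs hg measurable_snd]

lemma exists_le_map_snd_eq_withDensity_min (π : Measure (α × β)) [IsFiniteMeasure π]
    (ν : Measure β) [SigmaFinite ν] (a : ℝ≥0∞) :
    ∃ σ ≤ π, σ.map Prod.snd =
      ν.withDensity (fun y ↦ min ((π.map Prod.snd).rnDeriv ν y) a) := by
  obtain ⟨g, hg, hg1, hgP⟩ := exists_withDensity_eq_withDensity_min_rnDeriv (π.map Prod.snd) ν a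
  refine ⟨π.withDensity (fun p ↦ g p.2), ?_, by rw [map_snd_withDensity_comp_snd π hg, hgP]⟩
  calc π.withDensity (fun p ↦ g p.2) ≤ π.withDensity 1 :=
        withDensity_mono (ae_of_all _ fun p ↦ hg1 p.2)
    _ = π := withDensity_one

lemma smul_singularPart_add_withDensity_min_le (ν : Measure β) {r : β → ℝ≥0∞}
    (hr : Measurable r) (a : ℝ≥0∞) :
    a • ν.singularPart (ν.withDensity r) + ν.withDensity (fun y ↦ min (r y) a) ≤ a • ν := by
  obtain ⟨S, hS, hξS, hrS⟩ := ν.mutuallySingular_singularPart (ν.withDensity r)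
  have hr0 : r =ᵐ[ν.restrict Sᶜ] 0 := by
    rw [withDensity_apply _ hS.compl] at hrS
    exact (lintegral_eq_zero_iff hr).1 hrS
  have hsplit : ν.withDensity (fun y ↦ min (r y) a) =
      (ν.restrict S).withDensity (fun y ↦ min (r y) a) := by
    conv_lhs => rw [← Measure.restrict_add_restrict_compl (μ := ν) hS]
    have hzero : (ν.restrict Sᶜ).withDensity (fun y ↦ min (r y) a) = 0 := by
      rw [← withDensity_zero]
      exact withDensity_congr_ae (hr0.mono fun y hy ↦ by simp [hy])
    rw [withDensity_add_measure, hzero, add_zero]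
  have hξ : ν.singularPart (ν.withDensity r) ≤ ν.restrict Sᶜ := by
    rw [← Measure.restrict_eq_self_of_ae_mem (measure_eq_zero_iff_ae_notMem.1 hξS)]
    exact Measure.restrict_mono subset_rfl (Measure.singularPart_le _ _)
  calc a • ν.singularPart (ν.withDensity r) + ν.withDensity (fun y ↦ min (r y) a)
      ≤ a • ν.restrict Sᶜ + a • ν.restrict S := by
        rw [hsplit]
        exact add_le_add (smul_le_smul_left a hξ)
          ((withDensity_mono (ae_of_all _ fun y ↦ min_le_right _ _)).trans_eq
            (withDensity_const a))
    _ = a • ν := by rw [← smul_add, add_comm, Measure.restrict_add_restrict_compl hS]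

end Truncation

lemma exists_isSubcoupling_bind_restrict {α β : Type*} [MeasurableSpace α] [MeasurableSpace β]
    {E : Set (α × β)} (hE : MeasurableSet E) (ξ : Measure β) [IsFiniteMeasure ξ]
    (K : Kernel β α) [IsMarkovKernel K] (hK : ∀ᵐ y ∂ξ, K y {x | (x, y) ∈ E} = 1)
    {B : Set α} (hB : MeasurableSet B) :
    ∃ τ, IsSubcoupling E ((ξ.bind K).restrict B) ξ τ ∧ τ univ = ξ.bind K B := by
  set τ := (ξ ⊗ₘ K).map Prod.swap
  have hfst : τ.map Prod.fst = ξ.bind K := by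
    rw [← Measure.fst, Measure.fst_map_swap, Measure.snd_compProd]
  have hsnd : τ.map Prod.snd = ξ := by
    rw [← Measure.snd, Measure.snd_map_swap, Measure.fst_compProd]
  have hτE : τ Eᶜ = 0 := by
    rw [Measure.map_apply measurable_swap hE.compl, measure_eq_zero_iff_ae_notMem,
      Measure.ae_compProd_iff (measurable_swap hE.compl).compl]
    filter_upwards [hK] with y hy
    rw [← prob_compl_eq_zero_iff (s := {x | (x, y) ∈ E}) (measurable_prodMk_right hE)] at hy
    exact measure_eq_zero_iff_ae_notMem.1 hy
  refine ⟨τ.restrict (Prod.fst ⁻¹' B), ⟨inferInstance, ?_, ?_, ?_⟩, ?_⟩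
  · exact nonpos_iff_eq_zero.1 ((Measure.restrict_apply_le _ _).trans_eq hτE)
  · rw [← Measure.restrict_map measurable_fst hB, hfst]
  · exact hsnd ▸ Measure.map_mono Measure.restrict_le_self measurable_snd
  · rw [Measure.restrict_apply_univ, ← Measure.map_apply measurable_fst hB, hfst]

lemma ENNReal.eq_zero_of_forall_pos_le_ofReal_mul {m C : ℝ≥0∞} (hC : C ≠ ∞)
    (h : ∀ t : ℝ, 0 < t → m ≤ ENNReal.ofReal t * C) : m = 0 := by
  have hid : Tendsto (fun t : ℝ ↦ t) (nhdsWithin 0 (Ioi 0)) (nhds 0) :=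
    tendsto_nhdsWithin_of_tendsto_nhds tendsto_id
  have hlim : Tendsto (fun t : ℝ ↦ ENNReal.ofReal t * C) (nhdsWithin 0 (Ioi 0)) (nhds 0) := by
    simpa using ENNReal.Tendsto.mul_const (ENNReal.tendsto_ofReal hid) (Or.inr hC)
  exact nonpos_iff_eq_zero.1 (ge_of_tendsto hlim (eventually_nhdsWithin_of_forall h))

namespace IsLevelMaximin

variable {α β : Type*} [MeasurableSpace α] [MeasurableSpace β]
  {E : Set (α × β)} {μ : Measure α} {ν : Measure β} {π : Measure (α × β)}

lemma measure_univ_le_mul (h : IsLevelMaximin E μ ν π) {k : ℝ≥0∞} (hk : 1 ≤ k) (hk' : k ≠ ∞)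
    {t : ℝ} (ht : 0 < t) {σ : Measure (α × β)}
    (hσ : IsSubcoupling E (k • μ) (ENNReal.ofReal t • ν) σ) :
    σ univ ≤ k * ∫⁻ y, min ((π.map Prod.snd).rnDeriv ν y) (ENNReal.ofReal t) ∂ν := by
  have hk0 : k ≠ 0 := (zero_lt_one.trans_le hk).ne'
  have hscaled := (hσ.smul (ENNReal.inv_ne_top.2 hk0)).mono
    (by rw [smul_smul, ENNReal.inv_mul_cancel hk0 hk', one_smul])
    (ν' := ENNReal.ofReal t • ν) (Measure.le_iff'.2 fun _ ↦
      mul_le_of_le_one_left' (ENNReal.inv_le_one.2 hk))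
  have := h t ht _ hscaled
  rwa [Measure.smul_apply, smul_eq_mul, ENNReal.inv_mul_le_iff hk0 hk'] at this

lemma measure_univ_le_of_isSubcoupling_singularPart [IsFiniteMeasure π] [SigmaFinite ν]
    (h : IsLevelMaximin E μ ν π) (hπE : π Eᶜ = 0) (hπ : π.map Prod.fst = μ)
    {M : ℝ≥0∞} (hM : M ≠ ∞) {τ : Measure (α × β)}
    (hτ : IsSubcoupling E (M • μ) (ν.singularPart (ν.withDensity ((π.map Prod.snd).rnDeriv ν))) τ)
    {t : ℝ} (ht : 0 < t) :
    τ univ ≤ M * ∫⁻ y, min ((π.map Prod.snd).rnDeriv ν y) (ENNReal.ofReal t) ∂ν := by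
  set a := ENNReal.ofReal t
  set r := (π.map Prod.snd).rnDeriv ν
  obtain ⟨σ, hσπ, hσ⟩ := exists_le_map_snd_eq_withDensity_min π ν a
  have hσF : σ univ = ∫⁻ y, min (r y) a ∂ν := by
    rw [← preimage_univ (f := Prod.snd), ← Measure.map_apply measurable_snd .univ, hσ,
      withDensity_apply _ .univ, Measure.restrict_univ]
  have : IsFiniteMeasure σ := isFiniteMeasure_of_le π hσπ
  have hσsub : IsSubcoupling E μ (ν.withDensity (fun y ↦ min (r y) a)) σ :=
    ⟨inferInstance, nonpos_iff_eq_zero.1 ((hσπ Eᶜ).trans_eq hπE),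
      hπ ▸ Measure.map_mono hσπ measurable_fst, hσ.le⟩
  have hsum := (hσsub.add (hτ.smul ENNReal.ofReal_ne_top)).mono (μ' := (1 + a * M) • μ)
    (ν' := a • ν) (by rw [smul_smul, add_smul, one_smul])
    (by
      rw [add_comm]
      exact smul_singularPart_add_withDensity_min_le ν (Measure.measurable_rnDeriv _ _) a)
  have hbound := h.measure_univ_le_mul le_self_add (by finiteness) ht hsum
  rw [Measure.add_apply, Measure.smul_apply, hσF, smul_eq_mul, add_mul, one_mul, mul_assoc,
    ENNReal.add_le_add_iff_left (hσF ▸ measure_ne_top σ univ)] at hbound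
  exact (ENNReal.mul_le_mul_iff_right (ENNReal.ofReal_pos.2 ht).ne' ENNReal.ofReal_ne_top).1 hbound

end IsLevelMaximin

theorem IsLevelMaximin.bind_singularPart_mutuallySingular {α β : Type*} [MeasurableSpace α]
    [MeasurableSpace β] {E : Set (α × β)} {μ : Measure α} {ν : Measure β} [IsFiniteMeasure ν]
    {π : Measure (α × β)} [IsFiniteMeasure π] (h : IsLevelMaximin E μ ν π)
    (hE : MeasurableSet E) (hπE : π Eᶜ = 0) (hπ : π.map Prod.fst = μ)
    (K : Kernel β α) [IsMarkovKernel K]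
    (hK : ∀ᵐ y ∂ν.singularPart (ν.withDensity ((π.map Prod.snd).rnDeriv ν)),
      K y {x | (x, y) ∈ E} = 1) :
    ((ν.singularPart (ν.withDensity ((π.map Prod.snd).rnDeriv ν))).bind K).MutuallySingular μ := by
  set ξ := ν.singularPart (ν.withDensity ((π.map Prod.snd).rnDeriv ν))
  have : IsFiniteMeasure μ := hπ ▸ inferInstance
  have : IsFiniteMeasure ξ := isFiniteMeasure_of_le ν (Measure.singularPart_le _ _)
  by_contra hsing
  obtain ⟨ε, hε, B, hB, hBpos, hεB⟩ :=
    Measure.exists_positive_of_not_mutuallySingular μ (ξ.bind K) (fun h' ↦ hsing h'.symm)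
  have hε0 : (ε : ℝ≥0∞) ≠ 0 := ENNReal.coe_ne_zero.2 hε.ne'
  have hdens : (ξ.bind K).restrict B ≤ (ε : ℝ≥0∞)⁻¹ • μ := Measure.le_iff.2 fun A hA ↦ by
    rw [Measure.restrict_apply hA, Measure.smul_apply, smul_eq_mul,
      ← ENNReal.mul_le_iff_le_inv hε0 ENNReal.coe_ne_top]
    exact (hεB A hA).trans (measure_mono inter_subset_left)
  obtain ⟨τ, hτ, hτB⟩ := exists_isSubcoupling_bind_restrict hE ξ K hK hB
  refine hBpos.ne' (ENNReal.eq_zero_of_forall_pos_le_ofReal_mul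
    (C := (ε : ℝ≥0∞)⁻¹ * ν univ) (by finiteness) fun t ht ↦ ?_)
  calc ξ.bind K B = τ univ := hτB.symm
    _ ≤ (ε : ℝ≥0∞)⁻¹ * ∫⁻ y, min ((π.map Prod.snd).rnDeriv ν y) (ENNReal.ofReal t) ∂ν :=
      h.measure_univ_le_of_isSubcoupling_singularPart hπE hπ (ENNReal.inv_ne_top.2 hε0)
        (hτ.mono hdens le_rfl) ht
    _ ≤ (ε : ℝ≥0∞)⁻¹ * (ENNReal.ofReal t * ν univ) := by
      gcongr
      exact (lintegral_mono fun _ ↦ min_le_right _ _).trans_eq (lintegral_const _)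
    _ = ENNReal.ofReal t * ((ε : ℝ≥0∞)⁻¹ * ν univ) := by ring

theorem singular_payload_stays_singular_under_backward_kernel_general
    [TopologicalSpace Ω0] [PolishSpace Ω0] [BorelSpace Ω0]
    [TopologicalSpace Ω1] [BorelSpace Ω1]
    (E : Set (Ω0 × Ω1)) (hE : IsClosed E)
    (ν0 : Measure Ω0) (ν1 : Measure Ω1) [IsFiniteMeasure ν0] [IsFiniteMeasure ν1]
    (π0 π1 : Measure (Ω0 × Ω1)) (hπ0 : π0 ∈ Plans0 E ν0) (hπ1 : π1 ∈ Plans1 E ν1)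
    (hlom0 : LevelOpt0 E ν0 ν1 π0) (hlom1 : LevelOpt1 E ν0 ν1 π1)
    -- symmetric density decomposition data
    (P0 : Measure Ω0) (hP0 : P0 = π1.map Prod.fst)
    (P1 : Measure Ω1) (hP1 : P1 = π0.map Prod.snd)
    (ν0perp : Measure Ω0) (hν0perp : ν0perp = ν0.singularPart (ν0.withDensity (P0.rnDeriv ν0)))
    (ν1perp : Measure Ω1) (hν1perp : ν1perp = ν1.singularPart (ν1.withDensity (P1.rnDeriv ν1))) :
    -- case ι = 0: kernels from Ω1 to Ω0 carried by the neighborhoods, ν1perp-a.e.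
    (∀ K : Kernel Ω1 Ω0, IsMarkovKernel K →
      (∀ᵐ y ∂ν1perp, K y {x : Ω0 | (x, y) ∈ E} = 1) →
      (ν1perp.bind (fun y => K y)).MutuallySingular ν0) ∧
    -- case ι = 1: kernels from Ω0 to Ω1 carried by the neighborhoods, ν0perp-a.e.
    (∀ K : Kernel Ω0 Ω1, IsMarkovKernel K →
      (∀ᵐ x ∂ν0perp, K x {y : Ω1 | (x, y) ∈ E} = 1) →
      (ν0perp.bind (fun x => K x)).MutuallySingular ν1) := by
  subst hP0 hP1 hν0perp hν1perp
  obtain ⟨_, hπ0E, hπ0fst⟩ := hπ0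
  obtain ⟨_, hπ1E, hπ1snd⟩ := hπ1
  refine ⟨fun K _ hK ↦ hlom0.isLevelMaximin.bind_singularPart_mutuallySingular
    hE.measurableSet hπ0E hπ0fst K hK, fun K _ hK ↦ ?_⟩
  have hπ1E' : π1.map Prod.swap (Prod.swap ⁻¹' E)ᶜ = 0 := by
    rwa [Measure.map_apply measurable_swap (measurable_swap hE.measurableSet).compl]
  have hπ1fst' : (π1.map Prod.swap).map Prod.fst = ν1 := by
    rwa [← Measure.fst, Measure.fst_map_swap]
  have := hlom1.isLevelMaximin_map_swap.bind_singularPart_mutuallySingular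
    (measurable_swap hE.measurableSet) hπ1E' hπ1fst' K
  rw [← Measure.snd, Measure.snd_map_swap] at this
  exact this hK

theorem singular_payload_stays_singular_under_backward_kernel
    [TopologicalSpace Ω0] [PolishSpace Ω0] [BorelSpace Ω0]
    [TopologicalSpace Ω1] [PolishSpace Ω1] [BorelSpace Ω1]
    (E : Set (Ω0 × Ω1)) (hE : IsClosed E)
    (ν0 : Measure Ω0) (ν1 : Measure Ω1) [IsFiniteMeasure ν0] [IsFiniteMeasure ν1]
    (hν0 : 0 < ν0 Set.univ) (hν1 : 0 < ν1 Set.univ)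
    (hNbhd0 : ∀ x : Ω0, ∃ y : Ω1, (x, y) ∈ E) (hNbhd1 : ∀ y : Ω1, ∃ x : Ω0, (x, y) ∈ E)
    (π0 π1 : Measure (Ω0 × Ω1)) (hπ0 : π0 ∈ Plans0 E ν0) (hπ1 : π1 ∈ Plans1 E ν1)
    (hlom0 : LevelOpt0 E ν0 ν1 π0) (hlom1 : LevelOpt1 E ν0 ν1 π1)
    -- symmetric density decomposition data
    (P0 : Measure Ω0) (hP0 : P0 = π1.map Prod.fst)
    (P1 : Measure Ω1) (hP1 : P1 = π0.map Prod.snd)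
    (ν0perp : Measure Ω0) (hν0perp : ν0perp = ν0.singularPart (ν0.withDensity (P0.rnDeriv ν0)))
    (ν1perp : Measure Ω1) (hν1perp : ν1perp = ν1.singularPart (ν1.withDensity (P1.rnDeriv ν1))) :
    -- case ι = 0: kernels from Ω1 to Ω0 carried by the neighborhoods, ν1perp-a.e.
    (∀ K : Kernel Ω1 Ω0, IsMarkovKernel K →
      (∀ᵐ y ∂ν1perp, K y {x : Ω0 | (x, y) ∈ E} = 1) →
      (ν1perp.bind (fun y => K y)).MutuallySingular ν0) ∧
    -- case ι = 1: kernels from Ω0 to Ω1 carried by the neighborhoods, ν0perp-a.e.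
    (∀ K : Kernel Ω0 Ω1, IsMarkovKernel K →
      (∀ᵐ x ∂ν0perp, K x {y : Ω1 | (x, y) ∈ E} = 1) →
      (ν0perp.bind (fun x => K x)).MutuallySingular ν1) :=
  singular_payload_stays_singular_under_backward_kernel_general E hE ν0 ν1 π0 π1 hπ0 hπ1 hlom0 hlom1
    P0 hP0 P1 hP1 ν0perp hν0perp ν1perp hν1perp
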